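/- arXiv:2202.02189 — 6 statements merged into one kernel-verified Lean document; each statement's English description precedes it below -/
import Mathlib

section
/- For any PNmatrix ⟨Σ, M⟩, its ω-power ⟨Σ, M^ω⟩ is saturated and characterizes the same single-conclusion logic: ⊢_M = ⊢_{M^ω}. -/
set_option autoImplicit false

namespace Paper

/-- Formulas over a signature: `C` is a universe of connective symbols with
arities `ar`, and a signature is a set `S` of connectives.  Variables are
indexed by `ℕ` (a countably infinite set). -/
inductive Fm (C : Type) (ar : C → ℕ) (S : Set C) : Type
  | var : ℕ → Fm C ar S
  | app : (c : C) → c ∈ S → (Fin (ar c) → Fm C ar S) → Fm C ar S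

variable {C : Type} {ar : C → ℕ}

/-- Application of a substitution. -/
def subst {S : Set C} (σ : ℕ → Fm C ar S) : Fm C ar S → Fm C ar S
  | .var n => σ n
  | .app c h args => .app c h (fun i => subst σ (args i))

/-- Embedding of formulas along a signature inclusion. -/
def emb {S0 S : Set C} (hS : S0 ⊆ S) : Fm C ar S0 → Fm C ar S
  | .var n => .var n
  | .app c h args => .app c (hS h) (fun i => emb hS (args i))

theorem unionLeft {S1 S2 : Set C} : S1 ⊆ S1 ∪ S2 := Set.subset_union_left
theorem unionRight {S1 S2 : Set C} : S2 ⊆ S1 ∪ S2 := Set.subset_union_right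

/-- Single-conclusion (Tarskian) consequence relation: reflexivity,
monotonicity, transitivity (cut) and substitution invariance. -/
def IsSC {S : Set C} (L : Set (Fm C ar S) → Fm C ar S → Prop) : Prop :=
  (∀ Γ A, A ∈ Γ → L Γ A) ∧
  (∀ Γ Γ' A, Γ ⊆ Γ' → L Γ A → L Γ' A) ∧
  (∀ Γ Δ A, (∀ B ∈ Δ, L Γ B) → L (Γ ∪ Δ) A → L Γ A) ∧
  (∀ σ Γ A, L Γ A → L (subst σ '' Γ) (subst σ A))

/-- Compactness of a single-conclusion relation. -/
def CompactSC {S : Set C} (L : Set (Fm C ar S) → Fm C ar S → Prop) : Prop :=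
  ∀ Γ A, L Γ A → ∃ Γ0, Γ0 ⊆ Γ ∧ Γ0.Finite ∧ L Γ0 A

/-- Image of a single-conclusion relation along a signature inclusion. -/
def embRelSC {S0 S : Set C} (hS : S0 ⊆ S)
    (L : Set (Fm C ar S0) → Fm C ar S0 → Prop) :
    Set (Fm C ar S) → Fm C ar S → Prop :=
  fun Γ A => ∃ Γ0 A0, L Γ0 A0 ∧ Γ = emb hS '' Γ0 ∧ A = emb hS A0

/-- `L` is the least single-conclusion logic containing `Base`. -/
def LeastSC {S : Set C} (Base L : Set (Fm C ar S) → Fm C ar S → Prop) : Prop :=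
  IsSC L ∧ (∀ Γ A, Base Γ A → L Γ A) ∧
  (∀ L', IsSC L' → (∀ Γ A, Base Γ A → L' Γ A) → ∀ Γ A, L Γ A → L' Γ A)

/-- `L` is the combination (fibring) of the single-conclusion logics
`L1`, `L2`: the least single-conclusion logic over `S1 ∪ S2` extending both. -/
def IsCombSC {S1 S2 : Set C}
    (L1 : Set (Fm C ar S1) → Fm C ar S1 → Prop)
    (L2 : Set (Fm C ar S2) → Fm C ar S2 → Prop)
    (L : Set (Fm C ar (S1 ∪ S2)) → Fm C ar (S1 ∪ S2) → Prop) : Prop :=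
  LeastSC (fun Γ A => embRelSC unionLeft L1 Γ A ∨ embRelSC unionRight L2 Γ A) L

/-- Multiple-conclusion consequence relation: overlap, dilution,
cut for sets, substitution invariance. -/
def IsMC {S : Set C} (Cn : Set (Fm C ar S) → Set (Fm C ar S) → Prop) : Prop :=
  (∀ Γ Δ, (Γ ∩ Δ).Nonempty → Cn Γ Δ) ∧
  (∀ Γ Δ Γ' Δ', Cn Γ Δ → Cn (Γ ∪ Γ') (Δ ∪ Δ')) ∧
  (∀ Γ Δ (Ω : Set (Fm C ar S)),
    (∀ Ω1 Ω2, Ω1 ∪ Ω2 = Ω → Ω1 ∩ Ω2 = ∅ → Cn (Γ ∪ Ω1) (Ω2 ∪ Δ)) → Cn Γ Δ) ∧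
  (∀ σ Γ Δ, Cn Γ Δ → Cn (subst σ '' Γ) (subst σ '' Δ))

def embRelMC {S0 S : Set C} (hS : S0 ⊆ S)
    (Cn : Set (Fm C ar S0) → Set (Fm C ar S0) → Prop) :
    Set (Fm C ar S) → Set (Fm C ar S) → Prop :=
  fun Γ Δ => ∃ Γ0 Δ0, Cn Γ0 Δ0 ∧ Γ = emb hS '' Γ0 ∧ Δ = emb hS '' Δ0

def LeastMC {S : Set C} (Base Cn : Set (Fm C ar S) → Set (Fm C ar S) → Prop) : Prop :=
  IsMC Cn ∧ (∀ Γ Δ, Base Γ Δ → Cn Γ Δ) ∧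
  (∀ Cn', IsMC Cn' → (∀ Γ Δ, Base Γ Δ → Cn' Γ Δ) → ∀ Γ Δ, Cn Γ Δ → Cn' Γ Δ)

def IsCombMC {S1 S2 : Set C}
    (C1 : Set (Fm C ar S1) → Set (Fm C ar S1) → Prop)
    (C2 : Set (Fm C ar S2) → Set (Fm C ar S2) → Prop)
    (Cn : Set (Fm C ar (S1 ∪ S2)) → Set (Fm C ar (S1 ∪ S2)) → Prop) : Prop :=
  LeastMC (fun Γ Δ => embRelMC unionLeft C1 Γ Δ ∨ embRelMC unionRight C2 Γ Δ) Cn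

/-- Multiple-conclusion relation determined by a set of bivaluations. -/
def mcBiv {S : Set C} (B : Set (Fm C ar S → Prop)) :
    Set (Fm C ar S) → Set (Fm C ar S) → Prop :=
  fun Γ Δ => ∀ b ∈ B, (∃ A ∈ Γ, ¬ b A) ∨ (∃ A ∈ Δ, b A)

/-- Single-conclusion relation determined by a set of bivaluations. -/
def scBiv {S : Set C} (B : Set (Fm C ar S → Prop)) :
    Set (Fm C ar S) → Fm C ar S → Prop :=
  fun Γ A => ∀ b ∈ B, (∀ B' ∈ Γ, b B') → b A

/-- A set of bivaluations is closed under substitutions. -/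
def SubstClosed {S : Set C} (B : Set (Fm C ar S → Prop)) : Prop :=
  ∀ b ∈ B, ∀ σ : ℕ → Fm C ar S, (fun A => b (subst σ A)) ∈ B

/-- Meet-closure of a set of bivaluations. -/
def meetCl {S : Set C} (B : Set (Fm C ar S → Prop)) : Set (Fm C ar S → Prop) :=
  {b | ∃ X, X ⊆ B ∧ b = fun A => ∀ b' ∈ X, b' A}

/-- A skeleton bijection for a signature inclusion `S0 ⊆ S`: it commutes
with `S0`-connectives and it maps variables and monoliths to variables. -/
structure Skel (ar : C → ℕ) {S0 S : Set C} (hS : S0 ⊆ S) where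
  toFun : Fm C ar S → Fm C ar S0
  bij : Function.Bijective toFun
  comm : ∀ (c : C) (hc : c ∈ S0) (args : Fin (ar c) → Fm C ar S),
    toFun (.app c (hS hc) args) = .app c hc (fun i => toFun (args i))
  mono : ∀ (c : C) (hc : c ∈ S) (args : Fin (ar c) → Fm C ar S),
    c ∉ S0 → ∃ n, toFun (.app c hc args) = .var n
  var : ∀ n : ℕ, ∃ m : ℕ, toFun (.var n) = .var m

/-- Extension of a set of bivaluations along the skeleton map. -/
def extBiv {S0 S : Set C} {hS : S0 ⊆ S} (sk : Skel ar hS)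
    (B : Set (Fm C ar S0 → Prop)) : Set (Fm C ar S → Prop) :=
  {b | ∃ b0 ∈ B, b = fun A => b0 (sk.toFun A)}

/-- Partial non-deterministic matrices (PNmatrices). -/
structure PN (C : Type) (ar : C → ℕ) (S : Set C) where
  V : Type
  D : Set V
  tbl : ∀ c : C, c ∈ S → (Fin (ar c) → V) → Set V

/-- Valuations of a PNmatrix. -/
def IsVal {S : Set C} (M : PN C ar S) (v : Fm C ar S → M.V) : Prop :=
  ∀ (c : C) (h : c ∈ S) (args : Fin (ar c) → Fm C ar S),
    v (.app c h args) ∈ M.tbl c h (fun i => v (args i))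

/-- Bivaluations induced by a PNmatrix. -/
def BVal {S : Set C} (M : PN C ar S) : Set (Fm C ar S → Prop) :=
  {b | ∃ v, IsVal M v ∧ b = fun A => v A ∈ M.D}

def scPN {S : Set C} (M : PN C ar S) : Set (Fm C ar S) → Fm C ar S → Prop :=
  scBiv (BVal M)

def mcPN {S : Set C} (M : PN C ar S) : Set (Fm C ar S) → Set (Fm C ar S) → Prop :=
  mcBiv (BVal M)

/-- Extension of a PNmatrix to a larger signature: new connectives are
interpreted fully non-deterministically. -/
def extPN {S0 S : Set C} (hS : S0 ⊆ S) (M : PN C ar S0) : PN C ar S where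
  V := M.V
  D := M.D
  tbl c _ args := {y | ∀ hc : c ∈ S0, y ∈ M.tbl c hc args}

/-- Strict product of two PNmatrices. -/
def sprod {S1 S2 : Set C} (M1 : PN C ar S1) (M2 : PN C ar S2) :
    PN C ar (S1 ∪ S2) where
  V := {p : M1.V × M2.V // p.1 ∈ M1.D ↔ p.2 ∈ M2.D}
  D := {p | p.val.1 ∈ M1.D ∧ p.val.2 ∈ M2.D}
  tbl c _ args :=
    {p | (∀ hc : c ∈ S1, p.val.1 ∈ M1.tbl c hc (fun i => (args i).val.1)) ∧
         (∀ hc : c ∈ S2, p.val.2 ∈ M2.tbl c hc (fun i => (args i).val.2))}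

/-- Theories of a single-conclusion relation. -/
def IsTheorySC {S : Set C} (L : Set (Fm C ar S) → Fm C ar S → Prop)
    (Γ : Set (Fm C ar S)) : Prop :=
  ∀ A, L Γ A → A ∈ Γ

/-- A PNmatrix is saturated if every consistent theory of its
single-conclusion logic is the set of designated formulas of a valuation. -/
def Saturated {S : Set C} (M : PN C ar S) : Prop :=
  ∀ Γ : Set (Fm C ar S), IsTheorySC (scPN M) Γ → Γ ≠ Set.univ →
    ∃ v, IsVal M v ∧ Γ = {A | v A ∈ M.D}

/-- The ω-power of a PNmatrix. -/
def omegaPow {S : Set C} (M : PN C ar S) : PN C ar S where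
  V := ℕ → M.V
  D := {x | ∀ i, x i ∈ M.D}
  tbl c h args := {y | ∀ i, y i ∈ M.tbl c h (fun k => args k i)}

/-- Strict homomorphisms of PNmatrices (rexpansions). -/
def IsHom {S0 S : Set C} (hS : S0 ⊆ S) (M : PN C ar S) (M0 : PN C ar S0)
    (h : M.V → M0.V) : Prop :=
  (∀ x, h x ∈ M0.D ↔ x ∈ M.D) ∧
  (∀ (c : C) (hc : c ∈ S0) (args : Fin (ar c) → M.V) (y : M.V),
    y ∈ M.tbl c (hS hc) args → h y ∈ M0.tbl c hc (fun i => h (args i)))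

/-- Sum of a family of PNmatrices over a common signature. -/
def psum {S : Set C} {I : Type} (Ms : I → PN C ar S) : PN C ar S where
  V := (i : I) × (Ms i).V
  D := {p | p.2 ∈ (Ms p.1).D}
  tbl c h args :=
    {p | ∃ xs : Fin (ar c) → (Ms p.1).V,
      (∀ k, args k = ⟨p.1, xs k⟩) ∧ p.2 ∈ (Ms p.1).tbl c h xs}

/-- Lindenbaum matrix with designated set `Γ`. -/
def lind {S : Set C} (Γ : Set (Fm C ar S)) : PN C ar S where
  V := Fm C ar S
  D := Γ
  tbl c h args := {Fm.app c h args}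

/-- Reduct of a PNmatrix to a subsignature. -/
def reduct {S0 S : Set C} (hS : S0 ⊆ S) (M : PN C ar S) : PN C ar S0 where
  V := M.V
  D := M.D
  tbl c hc := M.tbl c (hS hc)

/-- One-variable formulas (only the variable `0` occurs). -/
inductive OnlyVar0 {C : Type} {ar : C → ℕ} {S : Set C} : Fm C ar S → Prop
  | var : OnlyVar0 (.var 0)
  | app (c : C) (h : c ∈ S) (args : Fin (ar c) → Fm C ar S) :
      (∀ i, OnlyVar0 (args i)) → OnlyVar0 (.app c h args)

/-- `S_M(x)`: values of a one-variable `S0`-formula over valuations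
of `M` sending the variable to `x`. -/
def SMset {S0 S : Set C} (hS : S0 ⊆ S) (M : PN C ar S)
    (s : Fm C ar S0) (x : M.V) : Set M.V :=
  {w | ∃ v, IsVal M v ∧ v (.var 0) = x ∧ w = v (emb hS s)}

/-- `M` is `S0`-monadic. -/
def Monadic {S0 S : Set C} (hS : S0 ⊆ S) (M : PN C ar S) : Prop :=
  ∀ x y : M.V, x ≠ y → ∃ s : Fm C ar S0, OnlyVar0 s ∧
    (SMset hS M s x).Nonempty ∧ (SMset hS M s y).Nonempty ∧
    ((SMset hS M s x ⊆ M.D ∧ SMset hS M s y ∩ M.D = ∅) ∨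
     (SMset hS M s y ⊆ M.D ∧ SMset hS M s x ∩ M.D = ∅))

/-- Strict product of a PNmatrix over `S0 ⊆ S` with one over `S`
(the union of the signatures being `S`). -/
def sprodL {S0 S : Set C} (hS : S0 ⊆ S) (M1 : PN C ar S0) (M2 : PN C ar S) :
    PN C ar S where
  V := {p : M1.V × M2.V // p.1 ∈ M1.D ↔ p.2 ∈ M2.D}
  D := {p | p.val.1 ∈ M1.D ∧ p.val.2 ∈ M2.D}
  tbl c h args :=
    {p | (∀ hc : c ∈ S0, p.val.1 ∈ M1.tbl c hc (fun i => (args i).val.1)) ∧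
         p.val.2 ∈ M2.tbl c h (fun i => (args i).val.2)}

/-- All substitution instances (over `S1 ∪ S2`) of axiom schemata `Ax ⊆ Fm_{S2}`. -/
def axInst {S1 S2 : Set C} (Ax : Set (Fm C ar S2)) : Set (Fm C ar (S1 ∪ S2)) :=
  {B | ∃ A ∈ Ax, ∃ σ, B = subst σ (emb unionRight A)}

/-- The Nmatrix `M_Ax` associated to a set of axiom schemata. -/
def MAx (S1 : Set C) {S2 : Set C} (Ax : Set (Fm C ar S2)) : PN C ar (S1 ∪ S2) where
  V := {p : Fm C ar (S1 ∪ S2) × Bool // p.1 ∈ axInst (S1 := S1) Ax → p.2 = true}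
  D := {p | p.val.2 = true}
  tbl c h args := {p | p.val.1 = Fm.app c h (fun i => (args i).val.1)}


/-- Encoding of formulas into `ℕ`, using an injection `g : C → ℕ`. -/
private def fmEnc {C : Type} {ar : C → ℕ} {S : Set C} (g : C → ℕ) :
    Fm C ar S → ℕ
  | .var n => Nat.pair 0 n
  | .app c _ args =>
      Nat.pair 1 (Nat.pair (g c)
        (Encodable.encode (List.ofFn fun i => fmEnc g (args i))))

private theorem fmEnc_inj {C : Type} {ar : C → ℕ} {S : Set C} {g : C → ℕ}
    (hg : Function.Injective g) :
    Function.Injective (fmEnc (ar := ar) (S := S) g) := by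
  intro a
  induction a with
  | var n =>
    intro b h
    cases b with
    | var m =>
      simp only [fmEnc, Nat.pair_eq_pair] at h
      exact congrArg Fm.var h.2
    | app c hc args =>
      simp only [fmEnc, Nat.pair_eq_pair] at h
      exact absurd h.1 (by norm_num)
  | app c hc args ih =>
    intro b h
    cases b with
    | var m =>
      simp only [fmEnc, Nat.pair_eq_pair] at h
      exact absurd h.1 (by norm_num)
    | app c' hc' args' =>
      simp only [fmEnc, Nat.pair_eq_pair] at h
      obtain ⟨-, hgc, hl⟩ := h
      obtain rfl : c = c' := hg hgc
      have hl' := Encodable.encode_injective hl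
      rw [List.ofFn_inj] at hl'
      have : args = args' := funext fun i => ih i (congrFun hl' i)
      rw [this]

private instance fmCountable {C : Type} [Countable C] {ar : C → ℕ} {S : Set C} :
    Countable (Fm C ar S) := by
  obtain ⟨g, hg⟩ := (Countable.exists_injective_nat C)
  exact ⟨⟨fmEnc g, fmEnc_inj hg⟩⟩

private theorem isVal_proj {C : Type} {ar : C → ℕ} {S : Set C} {M : PN C ar S}
    {v} (hv : IsVal (omegaPow M) v) (i : ℕ) : IsVal M (fun A => v A i) :=
  fun c h args => hv c h args i

private theorem scPN_omega {C : Type} {ar : C → ℕ} {S : Set C} (M : PN C ar S) :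
    scPN M = scPN (omegaPow M) := by
  funext Γ A
  apply propext
  constructor
  · intro h b hb hΓ
    obtain ⟨v, hv, rfl⟩ := hb
    intro i
    exact h (fun A => v A i ∈ M.D) ⟨fun A => v A i, isVal_proj hv i, rfl⟩
      (fun B hB => hΓ B hB i)
  · intro h b hb hΓ
    obtain ⟨v, hv, rfl⟩ := hb
    have hv' : IsVal (omegaPow M) (fun A _ => v A) := fun c hc args i => hv c hc args
    exact h (fun A => (fun _ : ℕ => v A) ∈ (omegaPow M).D)
      ⟨fun A _ => v A, hv', rfl⟩ (fun B hB i => hΓ B hB) 0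

/-- the ω-power of a PNmatrix is saturated and characterizes the
same single-conclusion logic. -/
theorem statement11 {C : Type} [Countable C] {ar : C → ℕ} {S : Set C}
    (M : PN C ar S) :
    Saturated (omegaPow M) ∧ scPN M = scPN (omegaPow M) := by
  have hsc := scPN_omega M
  refine ⟨?_, hsc⟩
  intro Γ hΓth hΓne
  obtain ⟨A0, hA0⟩ := Set.ne_univ_iff_exists_notMem Γ |>.mp hΓne
  -- key: for A ∉ Γ there is a valuation of M satisfying Γ but not A
  have key : ∀ A ∉ Γ, ∃ v, IsVal M v ∧ (∀ B ∈ Γ, v B ∈ M.D) ∧ v A ∉ M.D := by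
    intro A hA
    have hnd : ¬ scPN M Γ A := by
      rw [hsc]; intro h; exact hA (hΓth A h)
    rw [scPN, scBiv] at hnd
    push_neg at hnd
    obtain ⟨b, hb, hΓb, hAb⟩ := hnd
    obtain ⟨v, hv, rfl⟩ := hb
    exact ⟨v, hv, hΓb, hAb⟩
  have : Nonempty (Fm C ar S) := ⟨.var 0⟩
  obtain ⟨e, he⟩ := exists_surjective_nat (Fm C ar S)
  have choice : ∀ i : ℕ, ∃ v, IsVal M v ∧ (∀ B ∈ Γ, v B ∈ M.D) ∧
      (e i ∉ Γ → v (e i) ∉ M.D) := by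
    intro i
    by_cases hi : e i ∈ Γ
    · obtain ⟨v, hv, h1, _⟩ := key A0 hA0
      exact ⟨v, hv, h1, fun h => absurd hi h⟩
    · obtain ⟨v, hv, h1, h2⟩ := key (e i) hi
      exact ⟨v, hv, h1, fun _ => h2⟩
  choose vs hval hsat hfail using choice
  refine ⟨fun A i => vs i A, fun c hc args i => hval i c hc args, ?_⟩
  ext A
  simp only [Set.mem_setOf_eq]
  constructor
  · intro hA i
    exact hsat i A hA
  · intro h
    by_contra hA
    obtain ⟨i, rfl⟩ := he A
    exact hfail i hA (h i)


end Paper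
end

section
/- For arbitrary PNmatrices ⟨Σ₁, M₁⟩ and ⟨Σ₂, M₂⟩, the combination of the single-conclusion logics they characterize is the single-conclusion logic characterized by the strict product of their ω-powers: ⊢_{M₁} • ⊢_{M₂} = ⊢_{M₁^ω ∗ M₂^ω}. -/
set_option autoImplicit false

namespace Paper

variable {C : Type} {ar : C → ℕ}

/-! ### Auxiliary development for statement13 -/

section Aux13

variable {C : Type} {ar : C → ℕ}

/-- Branching type for encoding formulas as W-types. -/
private def fmBeta (ar : C → ℕ) (S : Set C) : ℕ ⊕ {c : C // c ∈ S} → Type :=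
  fun a => Sum.elim (fun _ => Fin 0) (fun c => Fin (ar c.1)) a

private instance {S : Set C} : ∀ a, Fintype (fmBeta ar S a) := by
  rintro (n | c)
  · exact inferInstanceAs (Fintype (Fin 0))
  · exact inferInstanceAs (Fintype (Fin (ar c.1)))

private def fmToW {S : Set C} : Fm C ar S → WType (fmBeta ar S)
  | .var n => ⟨Sum.inl n, Fin.elim0⟩
  | .app c h args => ⟨Sum.inr ⟨c, h⟩, fun i => fmToW (args i)⟩

private theorem fmToW_inj {S : Set C} : Function.Injective (fmToW (ar := ar) (S := S)) := by
  intro a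
  induction a with
  | var n =>
    intro b h
    cases b with
    | var m =>
      rw [fmToW, fmToW] at h
      injection h with h1 h2
      injection h1 with h1
      rw [h1]
    | app c hc args =>
      rw [fmToW, fmToW] at h
      injection h with h1 h2
      exact absurd h1 (by simp)
  | app c hc args ih =>
    intro b h
    cases b with
    | var m =>
      rw [fmToW, fmToW] at h
      injection h with h1 h2
      exact absurd h1 (by simp)
    | app c' hc' args' =>
      rw [fmToW, fmToW] at h
      injection h with h1 h2
      have hcc : c = c' := by
        injection h1 with h1
        exact congrArg Subtype.val h1
      subst hcc
      have h2' := eq_of_heq h2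
      have : args = args' := funext fun i => ih i (congrFun h2' i)
      rw [this]

theorem countable_fm {S : Set C} [Countable C] : Countable (Fm C ar S) := by
  classical
  obtain ⟨encS⟩ := nonempty_encodable {c : C // c ∈ S}
  haveI := encS
  haveI : ∀ a, Encodable (fmBeta ar S a) := by
    rintro (n | c)
    · exact inferInstanceAs (Encodable (Fin 0))
    · exact inferInstanceAs (Encodable (Fin (ar c.1)))
  exact Function.Injective.countable (fmToW_inj (ar := ar) (S := S))

/-- Atoms of `Fm C ar S` relative to subsignature `S0`. -/
def FmAtom (S0 : Set C) {S : Set C} : Fm C ar S → Prop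
  | .var _ => True
  | .app c _ _ => c ∉ S0

theorem exists_atom_equiv (S0 : Set C) (S : Set C) [Countable C] :
    Nonempty ({A : Fm C ar S // FmAtom S0 A} ≃ ℕ) := by
  haveI : Countable (Fm C ar S) := countable_fm
  haveI : Infinite {A : Fm C ar S // FmAtom S0 A} :=
    Infinite.of_injective (fun n : ℕ => ⟨.var n, trivial⟩)
      (by intro a b h; injection congrArg Subtype.val h)
  obtain ⟨d⟩ := nonempty_denumerable {A : Fm C ar S // FmAtom S0 A}
  exact ⟨d.eqv⟩

variable {S0 S : Set C}

open Classical in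
/-- Skeleton map determined by an enumeration `e` of atoms. -/
noncomputable def skel (e : {A : Fm C ar S // FmAtom S0 A} ≃ ℕ) : Fm C ar S → Fm C ar S0 :=
  Fm.rec (fun n => .var (e ⟨.var n, trivial⟩))
    (fun c h args ih =>
      if hc : c ∈ S0 then .app c hc ih
      else .var (e ⟨.app c h args, hc⟩))

theorem skel_var (e : {A : Fm C ar S // FmAtom S0 A} ≃ ℕ) (n : ℕ) :
    skel e (.var n) = .var (e ⟨.var n, trivial⟩) := rfl

open Classical in
theorem skel_app (e : {A : Fm C ar S // FmAtom S0 A} ≃ ℕ) (c : C) (h : c ∈ S)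
    (args : Fin (ar c) → Fm C ar S) :
    skel e (.app c h args) =
      if hc : c ∈ S0 then .app c hc (fun i => skel e (args i))
      else .var (e ⟨.app c h args, hc⟩) := rfl

/-- Inverse of the skeleton map. -/
def unskel (hS : S0 ⊆ S) (e : {A : Fm C ar S // FmAtom S0 A} ≃ ℕ) :
    Fm C ar S0 → Fm C ar S
  | .var m => (e.symm m).val
  | .app c hc args => .app c (hS hc) (fun i => unskel hS e (args i))

theorem unskel_skel (hS : S0 ⊆ S) (e : {A : Fm C ar S // FmAtom S0 A} ≃ ℕ) :
    ∀ A, unskel hS e (skel e A) = A := by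
  intro A
  induction A with
  | var n =>
    rw [skel_var, unskel, Equiv.symm_apply_apply]
  | app c h args ih =>
    by_cases hc : c ∈ S0
    · rw [skel_app, dif_pos hc, unskel]
      exact congrArg (Fm.app c (hS hc)) (funext ih)
    · rw [skel_app, dif_neg hc, unskel, Equiv.symm_apply_apply]

theorem skel_unskel (hS : S0 ⊆ S) (e : {A : Fm C ar S // FmAtom S0 A} ≃ ℕ) :
    ∀ B, skel e (unskel hS e B) = B := by
  intro B
  induction B with
  | var m =>
    rw [unskel]
    obtain ⟨⟨A, hA⟩, hEA⟩ : ∃ a, e.symm m = a := ⟨_, rfl⟩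
    have hm : e ⟨A, hA⟩ = m := by rw [← hEA]; exact e.apply_symm_apply m
    rw [hEA]
    cases A with
    | var n =>
      rw [skel_var]
      exact congrArg Fm.var hm
    | app c h args =>
      rw [skel_app, dif_neg hA]
      exact congrArg Fm.var hm
  | app c hc args ih =>
    rw [unskel, skel_app, dif_pos hc]
    exact congrArg (Fm.app c hc) (funext ih)

theorem unskel_eq_subst (hS : S0 ⊆ S) (e : {A : Fm C ar S // FmAtom S0 A} ≃ ℕ) :
    ∀ B, unskel hS e B = subst (fun n => unskel hS e (.var n)) (emb hS B) := by
  intro B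
  induction B with
  | var m => rfl
  | app c hc args ih =>
    rw [unskel, emb, subst]
    exact congrArg (Fm.app c (hS hc)) (funext ih)

/-- `BVal` is closed under substitutions. -/
theorem substClosed_BVal {S' : Set C} (M : PN C ar S') : SubstClosed (BVal M) := by
  rintro b ⟨v, hv, rfl⟩ σ
  exact ⟨fun A => v (subst σ A), fun c h args => hv c h (fun i => subst σ (args i)), rfl⟩

theorem isSC_scBiv {S' : Set C} {B : Set (Fm C ar S' → Prop)} (hB : SubstClosed B) :
    IsSC (scBiv B) := by
  refine ⟨fun Γ A hA b hb hΓ => hΓ A hA,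
    fun Γ Γ' A hsub h b hb hΓ' => h b hb (fun B' hB' => hΓ' B' (hsub hB')),
    fun Γ Δ A hΔ h b hb hΓ => h b hb (fun B' hB' => ?_),
    fun σ Γ A h b hb hΓσ => h _ (hB b hb σ) (fun B' hB' => hΓσ _ ⟨B', hB', rfl⟩)⟩
  rcases hB' with hB' | hB'
  · exact hΓ B' hB'
  · exact hΔ B' hB' b hb hΓ

theorem isSC_scPN {S' : Set C} (M : PN C ar S') : IsSC (scPN M) :=
  isSC_scBiv (substClosed_BVal M)

theorem scPN_omegaPow_iff {S' : Set C} (M : PN C ar S') (Γ : Set (Fm C ar S'))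
    (A : Fm C ar S') : scPN (omegaPow M) Γ A ↔ scPN M Γ A := by
  constructor
  · rintro h b ⟨v, hv, rfl⟩ hΓ
    have := h (fun A => (fun _ : ℕ => v A) ∈ (omegaPow M).D)
      ⟨fun A _ => v A, fun c hc args _ => hv c hc args, rfl⟩
      (fun B hB _ => hΓ B hB)
    exact this 0
  · rintro h b ⟨V, hV, rfl⟩ hΓ
    intro i
    exact h (fun A => V A i ∈ M.D)
      ⟨fun A => V A i, fun c hc args => hV c hc args i, rfl⟩
      (fun B hB => hΓ B hB i)

theorem saturated_omegaPow {S' : Set C} [Countable C] (M : PN C ar S') :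
    Saturated (omegaPow M) := by
  intro Γ hTh hne
  haveI : Countable (Fm C ar S') := countable_fm
  have hcompl : Γᶜ.Nonempty := by
    rcases (Set.ne_univ_iff_exists_notMem _).mp hne with ⟨A, hA⟩
    exact ⟨A, hA⟩
  obtain ⟨f, hf⟩ := (Set.to_countable Γᶜ).exists_eq_range hcompl
  have key : ∀ n, ∃ v, IsVal M v ∧ (∀ B ∈ Γ, v B ∈ M.D) ∧ v (f n) ∉ M.D := by
    intro n
    have hfn : f n ∉ Γ := by
      have : f n ∈ Γᶜ := hf ▸ Set.mem_range_self n
      exact this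
    by_contra hcon
    push_neg at hcon
    refine hfn (hTh _ ((scPN_omegaPow_iff M Γ (f n)).mpr ?_))
    rintro b ⟨v, hv, rfl⟩ hΓ
    exact hcon v hv hΓ
  choose v hv hvΓ hvn using key
  refine ⟨fun A n => v n A, fun c hc args n => hv n c hc args, ?_⟩
  ext A
  constructor
  · exact fun hA n => hvΓ n A hA
  · intro h
    by_contra hA
    have : A ∈ Set.range f := hf ▸ hA
    obtain ⟨n, rfl⟩ := this
    exact hvn n (h n)

end Aux13


/-- for arbitrary PNmatrices,
`⊢_{M₁} • ⊢_{M₂} = ⊢_{M₁^ω ∗ M₂^ω}`. -/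
theorem statement13 {C : Type} [Countable C] {ar : C → ℕ} {S1 S2 : Set C}
    (M1 : PN C ar S1) (M2 : PN C ar S2) :
    IsCombSC (scPN M1) (scPN M2) (scPN (sprod (omegaPow M1) (omegaPow M2))) := by
  classical
  refine ⟨isSC_scPN _, ?_, ?_⟩
  · -- soundness: the base is contained in the product logic
    rintro Γ A (⟨Γ0, A0, h0, rfl, rfl⟩ | ⟨Γ0, A0, h0, rfl, rfl⟩)
    · rintro b ⟨v, hv, rfl⟩ hΓ
      have hu : IsVal (omegaPow M1) (fun B0 => (v (emb unionLeft B0)).val.1) := by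
        intro c hc args
        exact (hv c (unionLeft hc) (fun i => emb unionLeft (args i))).1 hc
      have h1 : ∀ i, (v (emb unionLeft A0)).val.1 i ∈ M1.D := by
        intro i
        exact h0 (fun B0 => (v (emb unionLeft B0)).val.1 i ∈ M1.D)
          ⟨fun B0 => (v (emb unionLeft B0)).val.1 i, fun c hc args => hu c hc args i, rfl⟩
          (fun B0 hB0 => (hΓ (emb unionLeft B0) ⟨B0, hB0, rfl⟩).1 i)
      exact ⟨h1, (v (emb unionLeft A0)).property.mp h1⟩
    · rintro b ⟨v, hv, rfl⟩ hΓ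
      have hu : IsVal (omegaPow M2) (fun B0 => (v (emb unionRight B0)).val.2) := by
        intro c hc args
        exact (hv c (unionRight hc) (fun i => emb unionRight (args i))).2 hc
      have h2 : ∀ i, (v (emb unionRight A0)).val.2 i ∈ M2.D := by
        intro i
        exact h0 (fun B0 => (v (emb unionRight B0)).val.2 i ∈ M2.D)
          ⟨fun B0 => (v (emb unionRight B0)).val.2 i, fun c hc args => hu c hc args i, rfl⟩
          (fun B0 hB0 => (hΓ (emb unionRight B0) ⟨B0, hB0, rfl⟩).2 i)
      exact ⟨(v (emb unionRight A0)).property.mpr h2, h2⟩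
  · -- minimality
    intro L' hL' hBase Γ A hPA
    obtain ⟨hrefl, hmono, hcut, hsubst⟩ := hL'
    by_cases hA : L' Γ A
    · exact hA
    set T : Set (Fm C ar (S1 ∪ S2)) := {B | L' Γ B} with hTdef
    have hΓT : Γ ⊆ T := fun B hB => hrefl Γ B hB
    have hATn : A ∉ T := hA
    have hThy : ∀ B, L' T B → B ∈ T := by
      intro B hB
      exact hcut Γ T B (fun B' hB' => hB')
        (hmono T (Γ ∪ T) B Set.subset_union_right hB)
    obtain ⟨e1⟩ := exists_atom_equiv (ar := ar) S1 (S1 ∪ S2)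
    obtain ⟨e2⟩ := exists_atom_equiv (ar := ar) S2 (S1 ∪ S2)
    -- generic construction of a saturating valuation from a skeleton
    have main : ∀ (S0 : Set C) (hS : S0 ⊆ S1 ∪ S2)
        (e : {B : Fm C ar (S1 ∪ S2) // FmAtom S0 B} ≃ ℕ)
        (M : PN C ar S0),
        (∀ Γ0 A0, scPN M Γ0 A0 →
          L' (emb hS '' Γ0) (emb hS A0)) →
        ∃ v : Fm C ar S0 → (ℕ → M.V), IsVal (omegaPow M) v ∧
          ∀ B, (v (skel e B) ∈ (omegaPow M).D ↔ B ∈ T) := by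
      intro S0 hS e M hsound
      have hmemT1 : ∀ B, skel e B ∈ skel e '' T ↔ B ∈ T := by
        intro B
        constructor
        · rintro ⟨B', hB', hBB⟩
          have h2 := congrArg (unskel hS e) hBB
          rw [unskel_skel, unskel_skel] at h2
          rwa [← h2]
        · exact fun h => ⟨B, h, rfl⟩
      have hThy1 : IsTheorySC (scPN (omegaPow M)) (skel e '' T) := by
        intro B1 hB1
        have hM : scPN M (skel e '' T) B1 := (scPN_omegaPow_iff M _ B1).mp hB1
        have hL1 : L' (emb hS '' (skel e '' T)) (emb hS B1) := hsound _ _ hM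
        have hL2 := hsubst (fun n => unskel hS e (.var n)) _ _ hL1
        have himg : subst (fun n => unskel hS e (.var n)) '' (emb hS '' (skel e '' T)) = T := by
          rw [← Set.image_comp, ← Set.image_comp]
          have : ∀ B ∈ T, ((subst (fun n => unskel hS e (.var n)) ∘ emb hS) ∘ skel e) B = id B := by
            intro B _
            show subst _ (emb hS (skel e B)) = B
            rw [← unskel_eq_subst, unskel_skel]
          rw [Set.image_congr this, Set.image_id]
        rw [himg, ← unskel_eq_subst] at hL2
        have hmem : unskel hS e B1 ∈ T := hThy _ hL2
        have : skel e (unskel hS e B1) ∈ skel e '' T := ⟨_, hmem, rfl⟩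
        rwa [skel_unskel] at this
      have hT1ne : skel e '' T ≠ Set.univ := by
        intro h
        have : skel e A ∈ skel e '' T := h ▸ Set.mem_univ _
        exact hATn ((hmemT1 A).mp this)
      obtain ⟨v, hv, hTv⟩ := saturated_omegaPow M (skel e '' T) hThy1 hT1ne
      refine ⟨v, hv, fun B => ?_⟩
      rw [← hmemT1 B, hTv]
      exact Iff.rfl
    obtain ⟨v1, hv1, hd1⟩ := main S1 unionLeft e1 M1
      (fun Γ0 A0 h0 => hBase _ _ (Or.inl ⟨Γ0, A0, h0, rfl, rfl⟩))
    obtain ⟨v2, hv2, hd2⟩ := main S2 unionRight e2 M2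
      (fun Γ0 A0 h0 => hBase _ _ (Or.inr ⟨Γ0, A0, h0, rfl, rfl⟩))
    set P := sprod (omegaPow M1) (omegaPow M2) with hPdef
    set w : Fm C ar (S1 ∪ S2) → P.V :=
      fun B => ⟨(v1 (skel e1 B), v2 (skel e2 B)), (hd1 B).trans (hd2 B).symm⟩ with hwdef
    have hw : IsVal P w := by
      intro c h args
      constructor
      · intro hc
        have hsk : skel e1 (Fm.app c h args) = Fm.app c hc (fun i => skel e1 (args i)) := by
          rw [skel_app, dif_pos hc]
        show v1 (skel e1 (Fm.app c h args)) ∈ _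
        rw [hsk]
        exact hv1 c hc (fun i => skel e1 (args i))
      · intro hc
        have hsk : skel e2 (Fm.app c h args) = Fm.app c hc (fun i => skel e2 (args i)) := by
          rw [skel_app, dif_pos hc]
        show v2 (skel e2 (Fm.app c h args)) ∈ _
        rw [hsk]
        exact hv2 c hc (fun i => skel e2 (args i))
    have hwD : ∀ B, w B ∈ P.D ↔ B ∈ T := by
      intro B
      constructor
      · exact fun h => (hd1 B).mp h.1
      · exact fun h => ⟨(hd1 B).mpr h, (hd2 B).mpr h⟩
    exact (hwD A).mp (hPA (fun B => w B ∈ P.D) ⟨w, hw, rfl⟩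
      (fun B hB => (hwD B).mpr (hΓT hB)))

end Paper
end

section
/- The strict product M₁ ∗ M₂ of PNmatrices ⟨Σ₁, M₁⟩ and ⟨Σ₂, M₂⟩, together with the projection maps π₁, π₂, is a categorical product in the category of PNmatrices with strict homomorphisms. -/
set_option autoImplicit false

namespace Paper

variable {C : Type} {ar : C → ℕ}

/-- the strict product with its projections is a categorical
product in the category of PNmatrices and strict homomorphisms. -/
theorem statement14 {C : Type} {ar : C → ℕ} {S1 S2 : Set C}
    (M1 : PN C ar S1) (M2 : PN C ar S2) :
    IsHom (unionLeft : S1 ⊆ S1 ∪ S2) (sprod M1 M2) M1 (fun p => p.val.1) ∧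
    IsHom (unionRight : S2 ⊆ S1 ∪ S2) (sprod M1 M2) M2 (fun p => p.val.2) ∧
    ∀ (S : Set C) (hS : S1 ∪ S2 ⊆ S) (N : PN C ar S)
      (h1 : N.V → M1.V) (h2 : N.V → M2.V),
      IsHom (Set.Subset.trans unionLeft hS) N M1 h1 →
      IsHom (Set.Subset.trans unionRight hS) N M2 h2 →
      ∃! h : N.V → (sprod M1 M2).V,
        IsHom hS N (sprod M1 M2) h ∧
        (∀ x, (h x).val.1 = h1 x) ∧ (∀ x, (h x).val.2 = h2 x) := by
  refine ⟨⟨fun x => ⟨fun h => ⟨h, x.property.mp h⟩, fun h => h.1⟩, ?_⟩,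
    ⟨fun x => ⟨fun h => ⟨x.property.mpr h, h⟩, fun h => h.2⟩, ?_⟩, ?_⟩
  · intro c hc args y hy; exact hy.1 hc
  · intro c hc args y hy; exact hy.2 hc
  · intro S hS N h1 h2 hh1 hh2
    refine ⟨fun x => ⟨(h1 x, h2 x), by
      simp only []; rw [hh1.1, hh2.1]⟩, ⟨⟨fun x => ?_, ?_⟩, fun x => rfl, fun x => rfl⟩, ?_⟩
    · exact ⟨fun hd => (hh1.1 x).mp hd.1, fun hx => ⟨(hh1.1 x).mpr hx, (hh2.1 x).mpr hx⟩⟩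
    · intro c hc args y hy
      constructor
      · intro hc1; exact hh1.2 c hc1 args y hy
      · intro hc2; exact hh2.2 c hc2 args y hy
    · intro h ⟨hhom, he1, he2⟩
      funext x
      apply Subtype.ext
      exact Prod.ext (he1 x) (he2 x)

end Paper
end

section
/- Let {⟨Σ, Mᵢ⟩ : i ∈ I} be a family of PNmatrices over a common signature Σ. If Σ contains at least one connective of arity at least 2, then the bivaluations of the sum PNmatrix ⊕{Mᵢ} are exactly the union of the bivaluations of the components: BVal(⊕M) = ⋃ᵢ BVal(Mᵢ). -/
set_option autoImplicit false

namespace Paper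

variable {C : Type} {ar : C → ℕ}

/-- if the signature has a connective of arity at least 2, then
`BVal(⊕ᵢ Mᵢ) = ⋃ᵢ BVal(Mᵢ)`. -/
theorem statement15 {C : Type} {ar : C → ℕ} {S : Set C} {I : Type}
    (Ms : I → PN C ar S) (hbin : ∃ c ∈ S, 2 ≤ ar c) :
    BVal (psum Ms) = ⋃ i, BVal (Ms i) := by
  obtain ⟨c, hc, h2⟩ := hbin
  ext b
  constructor
  · rintro ⟨v, hv, rfl⟩
    have hidx : ∀ A B : Fm C ar S, (v A).1 = (v B).1 := by
      intro A B
      obtain ⟨xs, hxs, -⟩ := hv c hc (fun k => if (k : ℕ) = 0 then A else B)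
      have h0 : (0 : ℕ) < ar c := by omega
      have h1 : (1 : ℕ) < ar c := by omega
      have e0 := hxs ⟨0, h0⟩
      have e1 := hxs ⟨1, h1⟩
      simp only [Fin.mk_one] at e0 e1
      norm_num at e0 e1
      rw [e0, e1]
    set i := (v (.var 0)).1 with hi
    have hA : ∀ A, (v A).1 = i := fun A => hidx A (.var 0)
    have cast_eq : ∀ (p : (j : I) × (Ms j).V) (j : I) (h : p.1 = j),
        p = ⟨j, cast (congrArg (fun j => (Ms j).V) h) p.2⟩ := by
      rintro ⟨a, x⟩ j h; cases h; rfl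
    set w : Fm C ar S → (Ms i).V :=
      fun A => cast (congrArg (fun j => (Ms j).V) (hA A)) (v A).2 with hw
    have heq : ∀ A, v A = ⟨i, w A⟩ := fun A => cast_eq (v A) i (hA A)
    have hval : IsVal (Ms i) w := by
      intro c' hc' args
      have h := hv c' hc' args
      rw [heq (Fm.app c' hc' args)] at h
      obtain ⟨xs, hxs, hmem⟩ := h
      have hx : ∀ k, xs k = w (args k) := by
        intro k
        have h' := ((heq (args k)).symm.trans (hxs k))
        exact (eq_of_heq (Sigma.mk.inj_iff.mp h').2).symm
      have : (fun k => w (args k)) = xs := funext fun k => (hx k).symm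
      rw [this]
      exact hmem
    refine Set.mem_iUnion.mpr ⟨i, w, hval, ?_⟩
    funext A
    rw [heq A]
    rfl
  · intro hb
    obtain ⟨i, v, hv, rfl⟩ := Set.mem_iUnion.mp hb
    refine ⟨fun A => ⟨i, v A⟩, ?_, rfl⟩
    intro c' hc' args
    exact ⟨fun k => v (args k), fun k => rfl, hv c' hc' args⟩

end Paper
end

section
/- Let ⟨Σ, ⊢⟩ be a single- (or multiple-) conclusion logic whose signature contains a connective of arity at least 2. Then ⊢ is characterized by the single Pmatrix obtained as the sum of its Lindenbaum bundle: ⊢ = ⊢_{⊕Lind(⟨Σ,⊢⟩)}. -/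
set_option autoImplicit false

namespace Paper

variable {C : Type} {ar : C → ℕ}

/-! A valuation of a sum of PNmatrices stays inside one summand: a connective of arity at least
two applied to formulas valued in different summands has an empty table. A valuation of a
Lindenbaum matrix is a substitution. Hence the bivaluations of `⊕ Lind` are exactly the maps
`A ↦ σ A ∈ Γ`, and every logic is determined by these (its theories, resp. its maximal
theory-pairs, pulled back along substitutions). -/

section

variable {S : Set C}

theorem subst_var_eq_self (A : Fm C ar S) : subst Fm.var A = A := by
  induction A with
  | var n => rfl
  | app c h args ih => exact congrArg (Fm.app c h) (funext ih)

theorem IsVal.psum_fst_eq (hbin : ∃ c ∈ S, 2 ≤ ar c) {I : Type} {Ms : I → PN C ar S}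
    {v : Fm C ar S → (psum Ms).V} (hv : IsVal (psum Ms) v) (A B : Fm C ar S) :
    (v A).1 = (v B).1 := by
  obtain ⟨c, hc, h2⟩ := hbin
  obtain ⟨xs, hargs, -⟩ := hv c hc fun k => if k.val = 0 then A else B
  have hA := hargs ⟨0, by omega⟩
  have hB := hargs ⟨1, by omega⟩
  simp only [if_pos, if_neg, one_ne_zero, not_false_eq_true] at hA hB
  exact (congrArg Sigma.fst hA).trans (congrArg Sigma.fst hB).symm

theorem IsVal.psum_lind_snd_eq_subst {I : Type} {f : I → Set (Fm C ar S)}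
    {v : Fm C ar S → (psum fun i => lind (f i)).V} (hv : IsVal (psum fun i => lind (f i)) v)
    (A : Fm C ar S) :
    ((v A).2 : Fm C ar S) = subst (fun n => (v (.var n)).2) A := by
  induction A with
  | var n => rfl
  | app c h args ih =>
    obtain ⟨xs, hargs, hmem⟩ := hv c h args
    have hxs : xs = fun k => ((v (args k)).2 : Fm C ar S) :=
      funext fun k => (congrArg (fun p : (i : I) × Fm C ar S => p.2) (hargs k)).symm
    have happ : ((v (.app c h args)).2 : Fm C ar S) = .app c h xs := hmem
    rw [happ, hxs]
    exact congrArg (Fm.app c h) (funext ih)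

theorem isVal_psum_lind_subst {I : Type} (f : I → Set (Fm C ar S)) (i : I)
    (σ : ℕ → Fm C ar S) :
    IsVal (psum fun i => lind (f i)) fun A => ⟨i, subst σ A⟩ :=
  fun _ _ args => ⟨fun k => subst σ (args k), fun _ => rfl, rfl⟩

theorem bval_psum_lind (hbin : ∃ c ∈ S, 2 ≤ ar c) {I : Type} (f : I → Set (Fm C ar S)) :
    BVal (psum fun i => lind (f i)) = {b | ∃ i σ, b = fun A => subst σ A ∈ f i} := by
  ext b
  constructor
  · rintro ⟨v, hv, rfl⟩
    refine ⟨(v (.var 0)).1, fun n => (v (.var n)).2, funext fun A => ?_⟩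
    show ((v A).2 ∈ f (v A).1) = _
    rw [← hv.psum_lind_snd_eq_subst A, hv.psum_fst_eq hbin A (.var 0)]
    rfl
  · rintro ⟨i, σ, rfl⟩
    exact ⟨_, isVal_psum_lind_subst f i σ, rfl⟩

theorem IsSC.isTheorySC_setOf {L : Set (Fm C ar S) → Fm C ar S → Prop} (hL : IsSC L)
    (Γ : Set (Fm C ar S)) : IsTheorySC L {B | L Γ B} := fun A hA =>
  hL.2.2.1 Γ {B | L Γ B} A (fun _ hB => hB) (hL.2.1 _ _ _ Set.subset_union_right hA)

theorem IsSC.eq_scBiv_theories {L : Set (Fm C ar S) → Fm C ar S → Prop} (hL : IsSC L) :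
    L = scBiv {b | ∃ (Γ : {Γ // IsTheorySC L Γ}) (σ : ℕ → Fm C ar S),
      b = fun A => subst σ A ∈ Γ.1} := by
  have ⟨hrefl, hmono, _, hsubst⟩ := hL
  funext Γ A
  apply propext
  constructor
  · rintro h _ ⟨Θ, σ, rfl⟩ hΓ
    refine Θ.2 _ (hmono _ _ _ ?_ (hsubst σ Γ A h))
    rintro _ ⟨B, hB, rfl⟩
    exact hΓ B hB
  · intro h
    have := h _ ⟨⟨_, hL.isTheorySC_setOf Γ⟩, Fm.var, rfl⟩ fun B hB => by
      simpa only [subst_var_eq_self, Set.mem_ofPred_eq] using hrefl Γ B hB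
    simpa only [subst_var_eq_self, Set.mem_ofPred_eq] using this

theorem IsMC.of_forall_compl {Cn : Set (Fm C ar S) → Set (Fm C ar S) → Prop} (hCn : IsMC Cn)
    {Γ Δ : Set (Fm C ar S)} (h : ∀ Ω, Cn (Γ ∪ Ω) (Ωᶜ ∪ Δ)) : Cn Γ Δ := by
  refine hCn.2.2.1 Γ Δ Set.univ fun Ω₁ Ω₂ hunion hdisj => ?_
  have hcompl : Ω₂ = Ω₁ᶜ :=
    (IsCompl.compl_eq ⟨Set.disjoint_iff_inter_eq_empty.mpr hdisj,
      codisjoint_iff.mpr hunion⟩).symm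
  exact hcompl ▸ h Ω₁

theorem IsMC.eq_mcBiv_maximal {Cn : Set (Fm C ar S) → Set (Fm C ar S) → Prop} (hCn : IsMC Cn) :
    Cn = mcBiv {b | ∃ (Ω : {Ω // ¬ Cn Ω Ωᶜ}) (σ : ℕ → Fm C ar S),
      b = fun A => subst σ A ∈ Ω.1} := by
  have ⟨hoverlap, hdil, _, hsubst⟩ := hCn
  funext Γ Δ
  apply propext
  constructor
  · rintro h _ ⟨Ω, σ, rfl⟩
    by_contra! hsound
    obtain ⟨hΓ, hΔ⟩ := hsound
    have hΓΩ : subst σ '' Γ ∪ Ω.1 = Ω.1 := by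
      refine Set.union_eq_self_of_subset_left ?_
      rintro _ ⟨B, hB, rfl⟩
      exact hΓ B hB
    have hΔΩ : subst σ '' Δ ∪ Ω.1ᶜ = Ω.1ᶜ := by
      refine Set.union_eq_self_of_subset_left ?_
      rintro _ ⟨B, hB, rfl⟩
      exact hΔ B hB
    have := hdil _ _ Ω.1 Ω.1ᶜ (hsubst σ Γ Δ h)
    rw [hΓΩ, hΔΩ] at this
    exact Ω.2 this
  · intro h
    refine hCn.of_forall_compl fun Ω => ?_
    by_cases hΩ : Cn Ω Ωᶜ
    · simpa only [Set.union_comm Ω Γ] using hdil _ _ Γ Δ hΩ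
    · rcases h _ ⟨⟨Ω, hΩ⟩, Fm.var, rfl⟩ with ⟨A, hA, hAΩ⟩ | ⟨A, hA, hAΩ⟩
      · rw [subst_var_eq_self] at hAΩ
        exact hoverlap _ _ ⟨A, Or.inl hA, Or.inl hAΩ⟩
      · rw [subst_var_eq_self] at hAΩ
        exact hoverlap _ _ ⟨A, Or.inr hAΩ, Or.inr hA⟩

end

/-- any single- (or multiple-) conclusion logic over a signature
with a connective of arity at least 2 is characterized by the sum of its
Lindenbaum bundle. -/
theorem statement16 {C : Type} {ar : C → ℕ} {S : Set C}
    (hbin : ∃ c ∈ S, 2 ≤ ar c) :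
    (∀ L : Set (Fm C ar S) → Fm C ar S → Prop, IsSC L →
      L = scPN (psum (fun Γ : {Γ : Set (Fm C ar S) // IsTheorySC L Γ} =>
        lind Γ.1))) ∧
    (∀ Cn : Set (Fm C ar S) → Set (Fm C ar S) → Prop, IsMC Cn →
      Cn = mcPN (psum (fun Γ : {Γ : Set (Fm C ar S) // ¬ Cn Γ Γᶜ} =>
        lind Γ.1))) := by
  refine ⟨fun L hL => ?_, fun Cn hCn => ?_⟩
  · rw [scPN, bval_psum_lind hbin Subtype.val]
    exact hL.eq_scBiv_theories
  · rw [mcPN, bval_psum_lind hbin Subtype.val]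
    exact hCn.eq_mcBiv_maximal

end Paper
end

section
/- The functors Lind_⊕ and BVal form a Galois connection between the preorder of sets of bivaluations and the rexpansion preorder of PNmatrices: for every ⟨Σ, B⟩ (B ⊆ BVal(Σ) closed under substitutions) and every PNmatrix ⟨Σ₀, M₀⟩, one has Lind_⊕(⟨Σ, B⟩) ⊑ ⟨Σ₀, M₀⟩ if and only if ⟨Σ, B⟩ ⊑ BVal(⟨Σ₀, M₀⟩). -/
set_option autoImplicit false

namespace Paper

variable {C : Type} {ar : C → ℕ}

/-!
A strict homomorphism `h : M → M₀` transports every valuation `v` of `M` to the valuation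
`h ∘ v ∘ skel⁻¹` of `M₀`, whose bivaluation composed with `skel` is that of `v`; and each
`b ∈ B` is the bivaluation of the identity valuation of the Lindenbaum matrix `M_b`, seen in
the sum through `ι_b`. This gives `B ⊆ BVal(Lind_⊕ B) ⊆ BVal(M₀)^Σ`. Conversely, if
`b = b₀ ∘ skel` with `b₀` the bivaluation of a valuation `v₀` of `M₀`, then `v₀ ∘ skel` is a
strict homomorphism `M_b → M₀`, and by the coproduct property these glue to one on the sum.
-/

namespace Skel

variable {S0 S : Set C} {hS : S0 ⊆ S}

noncomputable def equiv (sk : Skel ar hS) : Fm C ar S ≃ Fm C ar S0 :=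
  Equiv.ofBijective sk.toFun sk.bij

@[simp]
theorem equiv_apply (sk : Skel ar hS) (A : Fm C ar S) : sk.equiv A = sk.toFun A := rfl

theorem equiv_symm_app (sk : Skel ar hS) (c : C) (hc : c ∈ S0)
    (args : Fin (ar c) → Fm C ar S0) :
    sk.equiv.symm (.app c hc args) = .app c (hS hc) (fun i => sk.equiv.symm (args i)) := by
  apply sk.equiv.injective
  rw [Equiv.apply_symm_apply, equiv_apply, sk.comm c hc]
  simp only [← equiv_apply, Equiv.apply_symm_apply]

end Skel

section Rexpansion

variable {S0 S : Set C} {hS : S0 ⊆ S} {M : PN C ar S} {M0 : PN C ar S0}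

theorem IsHom.isVal_comp_equiv_symm {h : M.V → M0.V} (hh : IsHom hS M M0 h)
    (sk : Skel ar hS) {v : Fm C ar S → M.V} (hv : IsVal M v) :
    IsVal M0 (fun A0 => h (v (sk.equiv.symm A0))) := by
  intro c hc args0
  beta_reduce
  rw [sk.equiv_symm_app]
  exact hh.2 c hc _ _ (hv c (hS hc) _)

theorem IsHom.bVal_subset_extBiv {h : M.V → M0.V} (hh : IsHom hS M M0 h)
    (sk : Skel ar hS) : BVal M ⊆ extBiv sk (BVal M0) := by
  rintro _ ⟨v, hv, rfl⟩
  refine ⟨_, ⟨_, hh.isVal_comp_equiv_symm sk hv, rfl⟩, ?_⟩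
  funext A
  rw [← sk.equiv_apply, Equiv.symm_apply_apply, hh.1]

theorem isHom_lind_comp_toFun (sk : Skel ar hS) {v0 : Fm C ar S0 → M0.V} (hv0 : IsVal M0 v0) :
    IsHom hS (lind {A | v0 (sk.toFun A) ∈ M0.D}) M0 (fun A => v0 (sk.toFun A)) := by
  refine ⟨fun A => Iff.rfl, ?_⟩
  rintro c hc (args : Fin (ar c) → Fm C ar S) y (rfl : y = _)
  show v0 (sk.toFun (.app c (hS hc) args)) ∈ M0.tbl c hc fun i => v0 (sk.toFun (args i))
  rw [sk.comm]
  exact hv0 c hc _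

theorem exists_isHom_lind_of_mem_extBiv (sk : Skel ar hS) {b : Fm C ar S → Prop}
    (hb : b ∈ extBiv sk (BVal M0)) : ∃ h, IsHom hS (lind {A | b A}) M0 h := by
  obtain ⟨_, ⟨v0, hv0, rfl⟩, rfl⟩ := hb
  exact ⟨_, isHom_lind_comp_toFun sk hv0⟩

end Rexpansion

section Sum

variable {S : Set C} {I : Type} {Ms : I → PN C ar S}

theorem isVal_psum_sigma_mk (i : I) {v : Fm C ar S → (Ms i).V} (hv : IsVal (Ms i) v) :
    IsVal (psum Ms) (fun A => ⟨i, v A⟩) :=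
  fun c h args => ⟨fun k => v (args k), fun _ => rfl, hv c h args⟩

theorem bVal_subset_bVal_psum (i : I) : BVal (Ms i) ⊆ BVal (psum Ms) := by
  rintro _ ⟨v, hv, rfl⟩
  exact ⟨_, isVal_psum_sigma_mk i hv, rfl⟩

theorem isHom_psum_desc {S0 : Set C} {hS : S0 ⊆ S} {M0 : PN C ar S0}
    {hs : ∀ i, (Ms i).V → M0.V} (H : ∀ i, IsHom hS (Ms i) M0 (hs i)) :
    IsHom hS (psum Ms) M0 (fun p => hs p.1 p.2) := by
  refine ⟨fun p => (H p.1).1 p.2, ?_⟩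
  rintro c hc args y ⟨xs, hxs, hy⟩
  have hargs : (fun k => hs (args k).1 (args k).2) = fun k => hs y.1 (xs k) := by
    funext k
    rw [hxs k]
  rw [hargs]
  exact (H y.1).2 c hc xs y.2 hy

theorem exists_isHom_psum {S0 : Set C} {hS : S0 ⊆ S} {M0 : PN C ar S0}
    (H : ∀ i, ∃ h, IsHom hS (Ms i) M0 h) : ∃ h, IsHom hS (psum Ms) M0 h := by
  choose hs hhs using H
  exact ⟨_, isHom_psum_desc hhs⟩

end Sum

theorem mem_bVal_lind {S : Set C} (Γ : Set (Fm C ar S)) : (· ∈ Γ) ∈ BVal (lind Γ) :=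
  ⟨id, fun _ _ _ => rfl, rfl⟩

theorem subset_bVal_psum_lind {S : Set C} (B : Set (Fm C ar S → Prop)) :
    B ⊆ BVal (psum (fun b : {b : Fm C ar S → Prop // b ∈ B} => lind {A | b.1 A})) :=
  fun b hb => bVal_subset_bVal_psum ⟨b, hb⟩ (mem_bVal_lind _)

theorem statement17_general {C : Type} {ar : C → ℕ} {S0 S : Set C} (hS : S0 ⊆ S)
    (sk : Skel ar hS) (B : Set (Fm C ar S → Prop))
    (M0 : PN C ar S0) :
    (∃ h, IsHom hS
        (psum (fun b : {b : Fm C ar S → Prop // b ∈ B} => lind {A | b.1 A}))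
        M0 h) ↔
      B ⊆ extBiv sk (BVal M0) := by
  constructor
  · rintro ⟨h, hh⟩
    exact (subset_bVal_psum_lind B).trans (hh.bVal_subset_extBiv sk)
  · intro hB
    exact exists_isHom_psum fun b => exists_isHom_lind_of_mem_extBiv sk (hB b.2)

/-- `Lind_⊕` and `BVal` form a Galois connection:
`Lind_⊕(⟨Σ,B⟩) ⊑ ⟨Σ₀,M₀⟩` iff `⟨Σ,B⟩ ⊑ BVal(⟨Σ₀,M₀⟩)`. -/
theorem statement17 {C : Type} {ar : C → ℕ} {S0 S : Set C} (hS : S0 ⊆ S)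
    (sk : Skel ar hS) (B : Set (Fm C ar S → Prop)) (hB : SubstClosed B)
    (M0 : PN C ar S0) :
    (∃ h, IsHom hS
        (psum (fun b : {b : Fm C ar S → Prop // b ∈ B} => lind {A | b.1 A}))
        M0 h) ↔
      B ⊆ extBiv sk (BVal M0) :=
  statement17_general hS sk B M0

end Paper
end
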